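/- arXiv:2403.05719 — 2 statements merged into one kernel-verified Lean document; each statement's English description precedes it below -/
import Mathlib

section
/- Suppose f : R → ℤ/pℤ has the representation f = Σ_{j=0}^{p^k−1} c_j·φ_j with coefficients c_j ∈ ℤ/pℤ. Then for every ℓ with 0 ≤ ℓ ≤ p^k−1, c_ℓ = (D^ℓ f)(0), where D^ℓ is the ℓ-fold iterate of D. -/
/-!
The `φ_m` form a Newton basis for the forward difference `D` on `ℤ/p^kℤ`: for `m + 1 < p ^ k`
we have `D φ_{m+1} = φ_m`, by Pascal's rule away from the wrap-around point `x = p^k - 1`, where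
the defect is `C(p^k, m+1) ≡ 0 mod p`. Hence `(D^ℓ φ_m)(0) = δ_{ℓm}` for `m < p^k`, and the
coefficients are read off by linearity.
-/

/-- The binomial phi function `φ_m : ℤ/p^kℤ → ℤ/pℤ`, `φ_m(x) = C(x̄, m) mod p`. -/
def phi (p k m : ℕ) (x : ZMod (p ^ k)) : ZMod p := (x.val.choose m : ZMod p)

open fwdDiff Function

theorem ZMod.val_add_one {n : ℕ} [NeZero n] (x : ZMod n) :
    (x + 1).val = (x.val + 1) % n := by
  rw [ZMod.val_add, ZMod.val_one_eq_one_mod, Nat.add_mod_mod]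

theorem phi_zero (p k : ℕ) : phi p k 0 = fun _ ↦ 1 := by
  ext x
  simp [phi]

theorem phi_apply_zero {p k m : ℕ} (hm : m ≠ 0) : phi p k m 0 = 0 := by
  simp [phi, Nat.choose_eq_zero_of_lt (Nat.pos_of_ne_zero hm)]

theorem fwdDiff_phi_succ {p k m : ℕ} [Fact p.Prime] (hm : m + 1 < p ^ k) :
    Δ_[1] (phi p k (m + 1)) = phi p k m := by
  have : NeZero (p ^ k) := ⟨by omega⟩
  ext x
  simp only [fwdDiff, phi, x.val_add_one]
  rcases (Nat.add_one_le_of_lt x.val_lt).lt_or_eq with hx | hx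
  · rw [Nat.mod_eq_of_lt hx, Nat.choose_succ_succ', Nat.cast_add, add_sub_cancel_right]
  · have hdvd : p ∣ x.val.choose m + x.val.choose (m + 1) := by
      rw [← Nat.choose_succ_succ', hx]
      exact (Fact.out : p.Prime).dvd_choose_pow (by omega) (by omega)
    rw [← ZMod.natCast_eq_zero_iff, Nat.cast_add] at hdvd
    rw [hx, Nat.mod_self, Nat.choose_zero_succ, Nat.cast_zero, zero_sub, neg_eq_iff_add_eq_zero,
      add_comm, hdvd]

theorem fwdDiff_iter_phi {p k : ℕ} [Fact p.Prime] (j m : ℕ) (hjm : m + j < p ^ k) :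
    (Δ_[1])^[m] (phi p k (m + j)) = phi p k j := by
  induction m generalizing j with
  | zero => simp
  | succ m ih =>
    rw [iterate_succ_apply, add_right_comm, fwdDiff_phi_succ (by omega), ih j (by omega)]

theorem fwdDiff_iter_phi_self {p k m : ℕ} [Fact p.Prime] (hm : m < p ^ k) :
    (Δ_[1])^[m] (phi p k m) = fun _ ↦ 1 := by
  simpa only [add_zero, phi_zero] using fwdDiff_iter_phi (p := p) (k := k) 0 m hm

theorem fwdDiff_iter_phi_apply_zero {p k m : ℕ} [Fact p.Prime] (l : ℕ) (hm : m < p ^ k) :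
    (Δ_[1])^[l] (phi p k m) 0 = if l = m then 1 else 0 := by
  rcases lt_trichotomy m l with hml | rfl | hlm
  · obtain ⟨i, rfl⟩ := Nat.exists_eq_add_of_lt hml
    have hconst : Δ_[1] (fun _ ↦ (0 : ZMod p)) = fun _ : ZMod (p ^ k) ↦ 0 := fwdDiff_const _ 0
    rw [if_neg (by omega), show m + i + 1 = i + 1 + m by omega, iterate_add_apply,
      fwdDiff_iter_phi_self hm, iterate_succ_apply, fwdDiff_const, iterate_fixed hconst]
  · rw [if_pos rfl, fwdDiff_iter_phi_self hm]
  · obtain ⟨i, rfl⟩ := Nat.exists_eq_add_of_lt hlm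
    rw [if_neg (by omega), add_assoc, fwdDiff_iter_phi (i + 1) l hm, phi_apply_zero (by omega)]

theorem stmt_14_general (p k : ℕ) [Fact p.Prime] (c : ℕ → ZMod p)
    (f : ZMod (p ^ k) → ZMod p)
    (hf : f = fun x => ∑ j ∈ Finset.range (p ^ k), c j * phi p k j x) :
    ∀ l < p ^ k,
      c l = ((fun g : ZMod (p ^ k) → ZMod p => fun x => g (x + 1) - g x)^[l] f) 0 := by
  intro l hl
  have hf_smul : f = ∑ j ∈ Finset.range (p ^ k), c j • phi p k j := by
    rw [hf]; ext x; simp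
  change c l = (Δ_[1])^[l] f 0
  rw [hf_smul, fwdDiff_iter_finsetSum, Finset.sum_apply]
  simp only [fwdDiff_iter_const_smul, Pi.smul_apply, smul_eq_mul]
  rw [Finset.sum_congr rfl fun j hj ↦ by
    rw [fwdDiff_iter_phi_apply_zero l (Finset.mem_range.mp hj)]]
  simp [hl]

/-- If `f = Σ_{j=0}^{p^k−1} c_j·φ_j`, then for every `ℓ < p^k` we have
`c_ℓ = (D^ℓ f)(0)`, where `Df(x) = f(x+1) − f(x)`. -/
theorem stmt_14 (p k : ℕ) [Fact p.Prime] (hk : 1 ≤ k) (c : ℕ → ZMod p)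
    (f : ZMod (p ^ k) → ZMod p)
    (hf : f = fun x => ∑ j ∈ Finset.range (p ^ k), c j * phi p k j x) :
    ∀ l < p ^ k,
      c l = ((fun g : ZMod (p ^ k) → ZMod p => fun x => g (x + 1) - g x)^[l] f) 0 :=
  stmt_14_general p k c f hf
end

section
/- For every natural number m with m ≤ p^k − 1 and every n ≥ 1, the dimension over ℤ/pℤ of Ω_m^n equals C(m+n, n), where C denotes the binomial coefficient. In particular, the functions φ_α for α ∈ {0,…,p^k−1}^n are linearly independent over ℤ/pℤ. -/
/-- The multivariate phi function `φ_α(x) = φ_{α_1}(x_1)⋯φ_{α_n}(x_n)`. -/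
def phiN (p k n : ℕ) (α : Fin n → ℕ) (x : Fin n → ZMod (p ^ k)) : ZMod p :=
  ∏ i, phi p k (α i) (x i)

/-!
Evaluating `φ_β` at a point `α ∈ {0,…,p^k−1}^n` gives `∏ C(α_i, β_i)`, which is `1` for `β = α`
and vanishes unless `β ≤ α` coordinatewise. Ordered by total degree, the evaluation matrix of the
`φ_α` on the box is therefore unitriangular, so they are linearly independent. For `m < p^k` every
`α` of total degree `≤ m` lies in the box, so `Ω_m^n` has a basis indexed by these tuples, and
stars and bars counts them.
-/

open Finset

theorem linearIndepOn_of_eval_unitriangular {ι X R β : Type*} [Ring R] [LinearOrder β]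
    {v : ι → X → R} {s : Set ι} (x : ι → X) (deg : ι → β)
    (hdiag : ∀ a ∈ s, v a (x a) = 1)
    (hlower : ∀ a ∈ s, ∀ b ∈ s, b ≠ a → v b (x a) ≠ 0 → deg b < deg a) :
    LinearIndepOn R v s := by
  classical
  rw [linearIndepOn_iff']
  intro t g hts hsum
  by_contra! hne
  -- evaluate the relation at the point of a coefficient of least degree
  obtain ⟨a, ha, hmin⟩ := {b ∈ t | g b ≠ 0}.exists_min_image deg
    (by simpa [Finset.Nonempty] using hne)
  rw [mem_filter] at ha
  have hsum_at := congrFun hsum (x a)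
  rw [Finset.sum_apply, Finset.sum_eq_single a] at hsum_at
  · simp only [Pi.smul_apply, smul_eq_mul, hdiag a (hts ha.1), mul_one, Pi.zero_apply] at hsum_at
    exact ha.2 hsum_at
  · intro b hb hba
    by_cases hgb : g b = 0
    · simp [hgb]
    by_contra hv
    have hlt := hlower a (hts ha.1) b (hts hb) hba fun h0 => hv (by simp [h0])
    exact (hmin b (mem_filter.2 ⟨hb, hgb⟩)).not_gt hlt
  · exact fun h => absurd ha.1 h

theorem card_piAntidiag_univ (ι : Type*) [Fintype ι] [DecidableEq ι] (j : ℕ) :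
    #(piAntidiag (univ : Finset ι) j) = (Fintype.card ι).multichoose j := by
  rw [← map_sym_eq_piAntidiag, card_map, sym_univ, card_univ, Sym.card_sym_eq_multichoose]

def tuplesWithSumLE (ι : Type*) [Fintype ι] [DecidableEq ι] (m : ℕ) : Finset (ι → ℕ) :=
  (range (m + 1)).biUnion fun j => piAntidiag univ j

theorem mem_tuplesWithSumLE {ι : Type*} [Fintype ι] [DecidableEq ι] {m : ℕ} {α : ι → ℕ} :
    α ∈ tuplesWithSumLE ι m ↔ ∑ i, α i ≤ m := by
  simp [tuplesWithSumLE]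

theorem card_tuplesWithSumLE (ι : Type*) [Fintype ι] [DecidableEq ι] (m : ℕ) :
    #(tuplesWithSumLE ι m) = (m + Fintype.card ι).choose (Fintype.card ι) := by
  rw [tuplesWithSumLE, card_biUnion, ← Nat.sum_range_multichoose]
  · simp only [card_piAntidiag_univ]
  · intro i _ j _ hij
    exact disjoint_left.2 fun α hi hj =>
      hij ((mem_piAntidiag.1 hi).1.symm.trans (mem_piAntidiag.1 hj).1)

theorem le_of_prod_choose_ne_zero {ι R : Type*} [Fintype ι] [CommSemiring R] {α x : ι → ℕ}
    (h : ∏ i, ((x i).choose (α i) : R) ≠ 0) : α ≤ x := by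
  intro i
  by_contra! hi
  exact h (prod_eq_zero (mem_univ i) (by rw [Nat.choose_eq_zero_of_lt hi, Nat.cast_zero]))

theorem phiN_natCast_of_lt {p k n : ℕ} (α x : Fin n → ℕ) (hx : ∀ i, x i < p ^ k) :
    phiN p k n α (fun i => (x i : ZMod (p ^ k))) = ∏ i, ((x i).choose (α i) : ZMod p) := by
  simp only [phiN, phi, ZMod.val_cast_of_lt (hx _)]

theorem linearIndepOn_phiN (p k n : ℕ) :
    LinearIndepOn (ZMod p) (phiN p k n) {α | ∀ i, α i < p ^ k} :=
  linearIndepOn_of_eval_unitriangular (fun α i => (α i : ZMod (p ^ k))) (fun α => ∑ i, α i)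
    (fun α hα => by simp [phiN_natCast_of_lt α α hα])
    (fun α hα β _ hne h => by
      rw [phiN_natCast_of_lt β α hα] at h
      exact Fintype.sum_strictMono (lt_of_le_of_ne (le_of_prod_choose_ne_zero h) hne))

theorem stmt_15_general (p k n m : ℕ) [Fact p.Prime]
    (hm : m ≤ p ^ k - 1) :
    Module.finrank (ZMod p)
      (Submodule.span (ZMod p)
        {f : (Fin n → ZMod (p ^ k)) → ZMod p |
          ∃ α : Fin n → ℕ, (∑ i, α i) ≤ m ∧ f = phiN p k n α}) = (m + n).choose n ∧
    LinearIndependent (ZMod p)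
      (fun α : Fin n → Fin (p ^ k) => phiN p k n (fun i => (α i).val)) := by
  have hm_lt : m < p ^ k := by have := pow_pos (Fact.out : p.Prime).pos k; omega
  constructor
  · have hrange : {f : (Fin n → ZMod (p ^ k)) → ZMod p |
        ∃ α : Fin n → ℕ, (∑ i, α i) ≤ m ∧ f = phiN p k n α} =
        Set.range fun α : (tuplesWithSumLE (Fin n) m : Set (Fin n → ℕ)) => phiN p k n α := by
      ext f
      simp [mem_tuplesWithSumLE, eq_comm]
    have hbox : (tuplesWithSumLE (Fin n) m : Set (Fin n → ℕ)) ⊆ {α | ∀ i, α i < p ^ k} :=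
      fun α hα i => ((single_le_sum (fun j _ => Nat.zero_le (α j)) (mem_univ i)).trans
        (mem_tuplesWithSumLE.1 hα)).trans_lt hm_lt
    rw [hrange, finrank_span_eq_card ((linearIndepOn_phiN p k n).mono hbox)]
    simpa using card_tuplesWithSumLE (Fin n) m
  · have hval : Function.Injective fun (α : Fin n → Fin (p ^ k)) i => (α i : ℕ) :=
      fun α β h => funext fun i => Fin.ext (congrFun h i)
    refine (linearIndepOn_range_iff hval (phiN p k n)).1 ((linearIndepOn_phiN p k n).mono ?_)
    rintro _ ⟨α, rfl⟩ i
    exact (α i).isLt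

/-- For `m ≤ p^k − 1` and `n ≥ 1`, `dim Ω_m^n = C(m+n, n)`; in particular
the `φ_α` for `α ∈ {0,…,p^k−1}^n` are linearly independent over `ℤ/pℤ`. -/
theorem stmt_15 (p k n m : ℕ) [Fact p.Prime] (hk : 1 ≤ k) (hn : 1 ≤ n)
    (hm : m ≤ p ^ k - 1) :
    Module.finrank (ZMod p)
      (Submodule.span (ZMod p)
        {f : (Fin n → ZMod (p ^ k)) → ZMod p |
          ∃ α : Fin n → ℕ, (∑ i, α i) ≤ m ∧ f = phiN p k n α}) = (m + n).choose n ∧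
    LinearIndependent (ZMod p)
      (fun α : Fin n → Fin (p ^ k) => phiN p k n (fun i => (α i).val)) :=
  stmt_15_general p k n m hm
end
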